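/- arXiv:1307.0666 — 5 statements merged into one kernel-verified Lean document; each statement's English description precedes it below -/
import Mathlib

section
/- If M : [0,1]^k → ℝ is multiplicative on [0,1]^k and additive on D_k, then either M is identically zero or M is a coordinate projection, i.e., there exists an index j ∈ {1,…,k} such that M(x₁,…,x_k) = x_j for all x ∈ [0,1]^k. -/
open Finset

/-- `M : [0,1]^k → ℝ` is multiplicative: `M (x*y) = M x * M y` (componentwise product). -/
def IsMultiplicative (k : ℕ) (M : (Fin k → ℝ) → ℝ) : Prop :=
  ∀ x ∈ Set.Icc (0 : Fin k → ℝ) 1, ∀ y ∈ Set.Icc (0 : Fin k → ℝ) 1,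
    M (x * y) = M x * M y

/-- membership of the pair `(x, y)` in `D_k`: `x, y ∈ [0,1)^k` and `x + y ≤ 1`. -/
def MemD (k : ℕ) (x y : Fin k → ℝ) : Prop :=
  (∀ i, 0 ≤ x i ∧ x i < 1) ∧ (∀ i, 0 ≤ y i ∧ y i < 1) ∧ x + y ≤ 1

/-- `A : [0,1]^k → ℝ` is additive on `D_k`. -/
def IsAdditiveOnD (k : ℕ) (A : (Fin k → ℝ) → ℝ) : Prop :=
  ∀ x y : Fin k → ℝ, MemD k x y → A (x + y) = A x + A y

/-!
Along each coordinate axis `M` is additive and nonnegative (multiplicativity makes it a square),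
hence monotone, so by the usual Cauchy argument `M (tᵢ eᵢ) = aᵢ tᵢ` with `aᵢ = M eᵢ`. Additivity
on `[0, 1/2]^k` then gives `M x = ∑ aᵢ xᵢ` on all of `[0,1]^k`, and multiplicativity applied to
`eᵢ * eⱼ` shows that the `aᵢ` are orthogonal idempotents of `ℝ`: all vanish, or exactly one is `1`.
-/

def IsAdditiveOnUnitInterval (f : ℝ → ℝ) : Prop :=
  ∀ s t : ℝ, 0 ≤ s → s < 1 → 0 ≤ t → t < 1 → s + t ≤ 1 → f (s + t) = f s + f t

namespace IsAdditiveOnUnitInterval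

variable {f : ℝ → ℝ}

theorem map_zero (hf : IsAdditiveOnUnitInterval f) : f 0 = 0 := by
  simpa using hf 0 0 le_rfl one_pos le_rfl one_pos (by norm_num)

theorem map_nat_mul (hf : IsAdditiveOnUnitInterval f) {s : ℝ} (hs0 : 0 ≤ s) (hs1 : s < 1) :
    ∀ m : ℕ, m * s ≤ 1 → f (m * s) = m * f s
  | 0, _ => by simp [hf.map_zero]
  | m + 1, hm => by
    push_cast at hm ⊢
    have hms : (m : ℝ) * s < 1 := by
      rcases hs0.eq_or_lt with rfl | hpos
      · simp
      · linarith
    rw [add_one_mul, hf _ _ (by positivity) hms hs0 hs1 (by linarith),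
      map_nat_mul hf hs0 hs1 m hms.le]
    ring

theorem map_nat_div (hf : IsAdditiveOnUnitInterval f) {m n : ℕ} (hn : 2 ≤ n) (hmn : m ≤ n) :
    f (m / n) = f 1 * (m / n) := by
  have hn' : (2 : ℝ) ≤ n := by exact_mod_cast hn
  have hinv0 : (0 : ℝ) ≤ 1 / n := by positivity
  have hinv1 : (1 : ℝ) / n < 1 := by rw [div_lt_one] <;> linarith
  have hmn' : (m : ℝ) * (1 / n) ≤ 1 := by
    rw [mul_one_div, div_le_one (by linarith)]
    exact_mod_cast hmn
  have hn0 : (n : ℝ) ≠ 0 := by positivity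
  have hone : f 1 = n * f (1 / n) := by
    rw [← hf.map_nat_mul hinv0 hinv1 n (mul_one_div_cancel hn0).le, mul_one_div_cancel hn0]
  rw [← mul_one_div (m : ℝ), hf.map_nat_mul hinv0 hinv1 m hmn', hone]
  field_simp

theorem apply_le_apply (hf : IsAdditiveOnUnitInterval f)
    (hnonneg : ∀ t ∈ Set.Icc (0 : ℝ) 1, 0 ≤ f t)
    {r s : ℝ} (hr : 0 ≤ r) (hrs : r ≤ s) (hs : s < 1) : f r ≤ f s := by
  have h := hf r (s - r) hr (hrs.trans_lt hs) (sub_nonneg.2 hrs) (by linarith) (by linarith)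
  rw [add_sub_cancel] at h
  linarith [hnonneg (s - r) ⟨by linarith, by linarith⟩]

/-- Approximating `s` from below by `⌊n s⌋ / n`. -/
theorem apply_one_mul_le (hf : IsAdditiveOnUnitInterval f)
    (hnonneg : ∀ t ∈ Set.Icc (0 : ℝ) 1, 0 ≤ f t) {s : ℝ} (hs0 : 0 ≤ s) (hs1 : s < 1) :
    f 1 * s ≤ f s := by
  have hlim : Filter.Tendsto (fun n : ℕ => f 1 * (s - 1 / n)) Filter.atTop (nhds (f 1 * s)) := by
    simpa using (tendsto_const_nhds.sub tendsto_one_div_atTop_nhds_zero_nat).const_mul (f 1)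
  refine le_of_tendsto hlim ((Filter.eventually_ge_atTop 2).mono fun n hn => ?_)
  have hn' : (0 : ℝ) < n := by positivity
  set m := ⌊n * s⌋₊
  have hm_le : (m : ℝ) ≤ n * s := Nat.floor_le (by positivity)
  have hm_gt : n * s < m + 1 := Nat.lt_floor_add_one _
  have hmn : m ≤ n := by
    have : (m : ℝ) ≤ n := by nlinarith
    exact_mod_cast this
  have hms : (m : ℝ) / n ≤ s := by rw [div_le_iff₀ hn']; linarith
  calc f 1 * (s - 1 / n) ≤ f 1 * (m / n) := by
        gcongr
        · exact hnonneg 1 ⟨zero_le_one, le_rfl⟩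
        · rw [sub_le_iff_le_add, ← add_div, le_div_iff₀ hn']; linarith
    _ = f (m / n) := (hf.map_nat_div hn hmn).symm
    _ ≤ f s := hf.apply_le_apply hnonneg (by positivity) hms hs1

/-- The upper bound comes from the lower one applied to `1 - t`. -/
theorem apply_eq_apply_one_mul (hf : IsAdditiveOnUnitInterval f)
    (hnonneg : ∀ t ∈ Set.Icc (0 : ℝ) 1, 0 ≤ f t)
    {t : ℝ} (ht : t ∈ Set.Icc (0 : ℝ) 1) : f t = f 1 * t := by
  rcases ht.2.eq_or_lt with rfl | ht1
  · rw [mul_one]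
  rcases ht.1.eq_or_lt with rfl | ht0
  · rw [hf.map_zero, mul_zero]
  have hsplit := hf t (1 - t) ht0.le ht1 (by linarith) (by linarith) (by linarith)
  rw [add_sub_cancel] at hsplit
  have hlow := hf.apply_one_mul_le hnonneg ht0.le ht1
  have hlow' := hf.apply_one_mul_le hnonneg (sub_nonneg.2 ht1.le) (by linarith)
  linarith

end IsAdditiveOnUnitInterval

theorem eq_zero_or_eq_single_of_mul_eq_ite {ι R : Type*} [DecidableEq ι]
    [MonoidWithZero R] [IsLeftCancelMulZero R] (a : ι → R)
    (h : ∀ i j, a i * a j = if i = j then a i else 0) :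
    a = 0 ∨ ∃ j, a = Pi.single j 1 := by
  by_cases ha : a = 0
  · exact Or.inl ha
  obtain ⟨j, hj⟩ := Function.ne_iff.1 ha
  have haj : a j = 1 := by
    have hidem : IsIdempotentElem (a j) := (by simpa using h j j : a j * a j = a j)
    exact (IsIdempotentElem.iff_eq_zero_or_one.1 hidem).resolve_left hj
  refine Or.inr ⟨j, funext fun i => ?_⟩
  rcases eq_or_ne i j with rfl | hij
  · simp [haj]
  · have hprod := h i j
    rw [if_neg hij] at hprod
    simpa [hij] using (mul_eq_zero.1 hprod).resolve_right hj

theorem Pi.single_mem_Icc_zero_one {ι : Type*} [DecidableEq ι] (i : ι) {t : ℝ}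
    (ht : t ∈ Set.Icc (0 : ℝ) 1) : Pi.single i t ∈ Set.Icc (0 : ι → ℝ) 1 := by
  refine ⟨fun j => ?_, fun j => ?_⟩ <;> rcases eq_or_ne j i with rfl | hj <;> simp [*, ht.1, ht.2]

section

variable {k : ℕ} {M : (Fin k → ℝ) → ℝ}

theorem IsMultiplicative.nonneg (hmul : IsMultiplicative k M) {x : Fin k → ℝ}
    (hx : x ∈ Set.Icc 0 1) : 0 ≤ M x := by
  set y : Fin k → ℝ := fun i => √(x i)
  have hy : y ∈ Set.Icc (0 : Fin k → ℝ) 1 :=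
    ⟨fun i => Real.sqrt_nonneg _, fun i => Real.sqrt_le_one.2 (hx.2 i)⟩
  have hyy : y * y = x := funext fun i => Real.mul_self_sqrt (hx.1 i)
  rw [← hyy, hmul y hy y hy]
  exact mul_self_nonneg _

theorem IsAdditiveOnD.map_zero (hadd : IsAdditiveOnD k M) : M 0 = 0 := by
  have h := hadd 0 0 ⟨fun _ => ⟨le_rfl, one_pos⟩, fun _ => ⟨le_rfl, one_pos⟩, by simp⟩
  simpa using h

theorem IsAdditiveOnD.isAdditiveOnUnitInterval_single (hadd : IsAdditiveOnD k M) (i : Fin k) :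
    IsAdditiveOnUnitInterval fun t => M (Pi.single i t) := by
  intro s t hs0 hs1 ht0 ht1 hst
  show M (Pi.single i (s + t)) = M (Pi.single i s) + M (Pi.single i t)
  rw [Pi.single_add]
  refine hadd _ _ ⟨fun j => ?_, fun j => ?_, fun j => ?_⟩ <;>
    rcases eq_or_ne j i with rfl | hj <;> simp [*]

theorem apply_single_eq_mul (hmul : IsMultiplicative k M) (hadd : IsAdditiveOnD k M) (i : Fin k)
    {t : ℝ} (ht : t ∈ Set.Icc (0 : ℝ) 1) : M (Pi.single i t) = M (Pi.single i 1) * t :=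
  (hadd.isAdditiveOnUnitInterval_single i).apply_eq_apply_one_mul
    (fun _ hs => hmul.nonneg (Pi.single_mem_Icc_zero_one i hs)) ht

theorem IsAdditiveOnD.apply_eq_sum_single (hadd : IsAdditiveOnD k M) {x : Fin k → ℝ}
    (hx : ∀ i, 0 ≤ x i ∧ x i < 1) : M x = ∑ i, M (Pi.single i (x i)) := by
  suffices h : ∀ s : Finset (Fin k),
      M (∑ i ∈ s, Pi.single i (x i)) = ∑ i ∈ s, M (Pi.single i (x i)) by
    simpa [Finset.univ_sum_single] using h univ
  intro s
  induction s using Finset.induction_on with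
  | empty => simpa using hadd.map_zero
  | insert j s hj ih =>
    have hpart : ∀ l, (∑ i ∈ s, Pi.single i (x i)) l = if l ∈ s then x l else 0 := fun l => by
      rw [Finset.sum_apply, Finset.sum_pi_single]
    rw [sum_insert hj, sum_insert hj, hadd, ih]
    refine ⟨fun l => ?_, fun l => ?_, fun l => ?_⟩
    · rcases eq_or_ne l j with rfl | hl <;> simp [*]
    · rw [hpart]; split_ifs <;> simp [hx l]
    · rw [Pi.add_apply, hpart]
      rcases eq_or_ne l j with rfl | hl <;> split_ifs <;> simp [*, (hx l).2.le]

/-- `x` is split as `x/2 + x/2` so that every coordinate of the summands is below `1`. -/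
theorem apply_eq_sum_mul (hmul : IsMultiplicative k M) (hadd : IsAdditiveOnD k M)
    {x : Fin k → ℝ} (hx : x ∈ Set.Icc 0 1) : M x = ∑ i, M (Pi.single i 1) * x i := by
  set y : Fin k → ℝ := fun i => x i / 2
  have hx0 : ∀ i, 0 ≤ x i := hx.1
  have hx1 : ∀ i, x i ≤ 1 := hx.2
  have hy : ∀ i, 0 ≤ y i ∧ y i < 1 := fun i =>
    ⟨div_nonneg (hx0 i) zero_le_two, by linarith [hx1 i, show y i = x i / 2 from rfl]⟩
  have hyy : y + y = x := funext fun i => add_halves (x i)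
  have hD : MemD k y y := ⟨hy, hy, hyy ▸ hx.2⟩
  calc M x = M y + M y := by rw [← hadd y y hD, hyy]
    _ = ∑ i, (M (Pi.single i (y i)) + M (Pi.single i (y i))) := by
        rw [hadd.apply_eq_sum_single hy, sum_add_distrib]
    _ = ∑ i, M (Pi.single i 1) * x i := by
        refine sum_congr rfl fun i _ => ?_
        rw [apply_single_eq_mul hmul hadd i ⟨(hy i).1, (hy i).2.le⟩]
        ring

theorem IsMultiplicative.apply_single_one_mul_apply_single_one (hmul : IsMultiplicative k M)
    (hM0 : M 0 = 0) (i j : Fin k) :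
    M (Pi.single i 1) * M (Pi.single j 1) = if i = j then M (Pi.single i 1) else 0 := by
  have hone : (1 : ℝ) ∈ Set.Icc 0 1 := ⟨zero_le_one, le_rfl⟩
  rw [← hmul _ (Pi.single_mem_Icc_zero_one i hone) _ (Pi.single_mem_Icc_zero_one j hone),
    ← Pi.single_mul_left]
  rcases eq_or_ne i j with rfl | hij
  · simp
  · simp [hij, hM0]

end

theorem stmt_0_general (k : ℕ) (M : (Fin k → ℝ) → ℝ)
    (hmul : IsMultiplicative k M) (hadd : IsAdditiveOnD k M) :
    (∀ x ∈ Set.Icc (0 : Fin k → ℝ) 1, M x = 0) ∨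
      ∃ j : Fin k, ∀ x ∈ Set.Icc (0 : Fin k → ℝ) 1, M x = x j := by
  have hM : ∀ x ∈ Set.Icc (0 : Fin k → ℝ) 1, M x = ∑ i, M (Pi.single i 1) * x i :=
    fun _ hx => apply_eq_sum_mul hmul hadd hx
  rcases eq_zero_or_eq_single_of_mul_eq_ite _
    (hmul.apply_single_one_mul_apply_single_one hadd.map_zero) with h | ⟨j, h⟩
  · left
    intro x hx
    simp [hM x hx, fun i => congrFun h i]
  · right
    refine ⟨j, fun x hx => ?_⟩
    simp [hM x hx, fun i => congrFun h i, Pi.single_apply]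

/-- If `M` is multiplicative on `[0,1]^k` and additive on `D_k`, then `M` is identically
zero on `[0,1]^k` or a coordinate projection there. -/
theorem stmt_0 (k : ℕ) (hk : 0 < k) (M : (Fin k → ℝ) → ℝ)
    (hmul : IsMultiplicative k M) (hadd : IsAdditiveOnD k M) :
    (∀ x ∈ Set.Icc (0 : Fin k → ℝ) 1, M x = 0) ∨
      ∃ j : Fin k, ∀ x ∈ Set.Icc (0 : Fin k → ℝ) 1, M x = x j :=
  stmt_0_general k M hmul hadd
end

section
/- If the sequence of functions I_n : Γ_n → ℝ (n = 2, 3, …) is M-recursive with multiplicative function M : [0,1]^k → ℝ and is 3-semisymmetric, then the function f : [0,1]^k → ℝ defined by f(x) := I₂(1−x, x) satisfies the fundamental equation of information of multiplicative type M, i.e., f(x) + M(1−x)·f(y/(1−x)) = f(y) + M(1−y)·f(x/(1−y)) for all (x,y) ∈ D_k. -/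
open Finset

/-- membership in `Γ_n`: every `p i ≥ 0` and `∑ i, p i = 1`. -/
def MemGamma (k n : ℕ) (p : Fin n → Fin k → ℝ) : Prop :=
  (∀ i, 0 ≤ p i) ∧ ∑ i, p i = 1

/-- The sequence `I_n : Γ_n → ℝ` (n ≥ 2) is `M`-recursive.  (Division of vectors is
componentwise; since real division by `0` is `0`, the convention `0/(0+0) = 0` is automatic.) -/
def MRecursive (k : ℕ) (M : (Fin k → ℝ) → ℝ) (I : ∀ n, (Fin n → Fin k → ℝ) → ℝ) : Prop :=
  ∀ n : ℕ, ∀ p : Fin (n + 3) → Fin k → ℝ, MemGamma k (n + 3) p →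
    I (n + 3) p =
      I (n + 2) (Fin.cons (p 0 + p 1) (fun i : Fin (n + 1) => p i.succ.succ)) +
        M (p 0 + p 1) * I 2 ![p 0 / (p 0 + p 1), p 1 / (p 0 + p 1)]

/-- The sequence `I_n` is 3-semisymmetric. -/
def ThreeSemisymmetric (k : ℕ) (I : ∀ n, (Fin n → Fin k → ℝ) → ℝ) : Prop :=
  ∀ p : Fin 3 → Fin k → ℝ, MemGamma k 3 p → I 3 p = I 3 ![p 0, p 2, p 1]

lemma key_lemma (k : ℕ) (M : (Fin k → ℝ) → ℝ)
    (I : ∀ n, (Fin n → Fin k → ℝ) → ℝ) (hrec : MRecursive k M I)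
    (f : (Fin k → ℝ) → ℝ) (hf : ∀ x : Fin k → ℝ, f x = I 2 ![1 - x, x])
    (x y : Fin k → ℝ) (hx : ∀ i, 0 ≤ x i ∧ x i < 1) (hy : ∀ i, 0 ≤ y i)
    (hxy : x + y ≤ 1) :
    I 3 ![1 - x - y, y, x] = f x + M (1 - x) * f (y / (1 - x)) := by
  set p : Fin 3 → Fin k → ℝ := ![1 - x - y, y, x] with hp
  have hpg : MemGamma k 3 p := by
    constructor
    · intro j
      fin_cases j
      · intro i; have := hxy i
        simp only [Pi.add_apply, Pi.le_def, Pi.one_apply] at this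
        simp [hp]; linarith
      · intro i; simpa [hp] using hy i
      · intro i; simpa [hp] using (hx i).1
    · rw [Fin.sum_univ_three]
      funext i
      simp [hp]
  have h := hrec 0 p hpg
  have hne : ∀ i, (1 - x) i ≠ 0 := by
    intro i
    have := (hx i).2
    simp only [Pi.sub_apply, Pi.one_apply]
    intro hc; linarith
  have e1 : p 0 + p 1 = 1 - x := by
    funext i; simp [hp]
  have e2 : (Fin.cons (p 0 + p 1) (fun i : Fin 1 => p i.succ.succ) : Fin 2 → Fin k → ℝ)
      = ![1 - x, x] := by
    funext j
    fin_cases j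
    · simpa using e1
    · show p 2 = x
      simp [hp]
  have e3 : p 0 / (p 0 + p 1) = 1 - y / (1 - x) := by
    rw [e1]
    funext i
    have hi := hne i
    simp only [hp, Pi.div_apply, Pi.sub_apply, Pi.one_apply, Matrix.cons_val_zero] at hi ⊢
    field_simp
  have e4 : p 1 / (p 0 + p 1) = y / (1 - x) := by
    rw [e1]; simp [hp]
  rw [e2, e3, e4, e1] at h
  rw [h, ← hf, ← hf]

/-- If `I_n` is `M`-recursive and 3-semisymmetric, then `f x := I₂ (1 - x, x)` satisfies
the fundamental equation of information of multiplicative type `M` on `D_k`. -/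
theorem stmt_4 (k : ℕ) (hk : 0 < k) (M : (Fin k → ℝ) → ℝ)
    (hmul : IsMultiplicative k M) (I : ∀ n, (Fin n → Fin k → ℝ) → ℝ)
    (hrec : MRecursive k M I) (hsym : ThreeSemisymmetric k I)
    (f : (Fin k → ℝ) → ℝ) (hf : ∀ x : Fin k → ℝ, f x = I 2 ![1 - x, x]) :
    ∀ x y : Fin k → ℝ, MemD k x y →
      f x + M (1 - x) * f (y / (1 - x)) = f y + M (1 - y) * f (x / (1 - y)) := by
  intro x y ⟨hx, hy, hxy⟩
  have hyx : y + x ≤ 1 := by intro i; have := hxy i; simp [Pi.add_apply] at this ⊢; linarith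
  have k1 := key_lemma k M I hrec f hf x y hx (fun i => (hy i).1) hxy
  have k2 := key_lemma k M I hrec f hf y x hy (fun i => (hx i).1) hyx
  set q : Fin 3 → Fin k → ℝ := ![1 - y - x, x, y] with hq
  have hqg : MemGamma k 3 q := by
    constructor
    · intro j
      fin_cases j
      · intro i; have := hyx i
        simp only [Pi.add_apply, Pi.le_def, Pi.one_apply] at this
        simp [hq]; linarith
      · intro i; simpa [hq] using (hx i).1
      · intro i; simpa [hq] using (hy i).1
    · rw [Fin.sum_univ_three]; funext i; simp [hq]
  have hs := hsym q hqg
  have eq1 : (![q 0, q 2, q 1] : Fin 3 → Fin k → ℝ) = ![1 - y - x, y, x] := by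
    funext j; fin_cases j <;> simp [hq]
  have eq2 : (1 : Fin k → ℝ) - y - x = 1 - x - y := by funext i; simp; ring
  rw [eq1, eq2] at hs
  exact k1.symm.trans (hs.symm.trans k2)
end

section
/- Let ε ≥ 0, let M : [0,1]^k → ℝ be multiplicative, and let f : [0,1]^k → ℝ satisfy |f(x) + M(1−x)·f(y/(1−x)) − f(y) − M(1−y)·f(x/(1−y))| ≤ ε for all (x,y) ∈ D_k. Then |[M(q)+M(1−q)−1]·[f(p)−f(1)M(p)] − [M(p)+M(1−p)−1]·[f(q)−f(1)M(q)]| ≤ 4ε + 3ε·M(1−pq) holds for all p, q ∈ (0,1)^k. -/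
open Finset

set_option maxHeartbeats 1000000 in
/-- Key estimate in the stability theorem: the ε-version of the fundamental equation of
information of multiplicative type implies the stated bound for all `p, q ∈ (0,1)^k`. -/
theorem stmt_5 (k : ℕ) (hk : 0 < k) (ε : ℝ) (hε : 0 ≤ ε)
    (M : (Fin k → ℝ) → ℝ) (hmul : IsMultiplicative k M)
    (f : (Fin k → ℝ) → ℝ)
    (hf : ∀ x y : Fin k → ℝ, MemD k x y →
      |f x + M (1 - x) * f (y / (1 - x)) - f y - M (1 - y) * f (x / (1 - y))| ≤ ε) :
    ∀ p q : Fin k → ℝ, (∀ i, 0 < p i ∧ p i < 1) → (∀ i, 0 < q i ∧ q i < 1) →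
      |(M q + M (1 - q) - 1) * (f p - f 1 * M p) -
        (M p + M (1 - p) - 1) * (f q - f 1 * M q)| ≤ 4 * ε + 3 * ε * M (1 - p * q) := by
  -- membership helper
  have hIcc : ∀ x : Fin k → ℝ, (∀ i, 0 ≤ x i) → (∀ i, x i ≤ 1) →
      x ∈ Set.Icc (0 : Fin k → ℝ) 1 := by
    intro x h0 h1
    constructor
    · intro i; exact h0 i
    · intro i; exact h1 i
  -- nonnegativity of M on [0,1]^k
  have Mnn : ∀ x : Fin k → ℝ, (∀ i, 0 ≤ x i) → (∀ i, x i ≤ 1) → 0 ≤ M x := by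
    intro x h0 h1
    have hsm : (fun i => Real.sqrt (x i)) ∈ Set.Icc (0 : Fin k → ℝ) 1 :=
      hIcc _ (fun i => Real.sqrt_nonneg _) (fun i => Real.sqrt_le_one.mpr (h1 i))
    have hx2 : x = (fun i => Real.sqrt (x i)) * (fun i => Real.sqrt (x i)) := by
      funext i; exact (Real.mul_self_sqrt (h0 i)).symm
    rw [hx2, hmul _ hsm _ hsm]
    exact mul_self_nonneg _
  intro p q hp hq
  have hp0 : ∀ i, 0 < p i := fun i => (hp i).1
  have hp1 : ∀ i, p i < 1 := fun i => (hp i).2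
  have hq0 : ∀ i, 0 < q i := fun i => (hq i).1
  have hq1 : ∀ i, q i < 1 := fun i => (hq i).2
  have hd : ∀ i, 0 < 1 - p i * q i := by
    intro i; nlinarith [hp0 i, hp1 i, hq0 i, hq1 i]
  have hdne : ∀ i, (1 : ℝ) - p i * q i ≠ 0 := fun i => ne_of_gt (hd i)
  set rp : Fin k → ℝ := (1 - p) / (1 - p * q) with hrpdef
  set rq : Fin k → ℝ := (1 - q) / (1 - p * q) with hrqdef
  have hrp : ∀ i, rp i = (1 - p i) / (1 - p i * q i) := fun i => rfl
  have hrq : ∀ i, rq i = (1 - q i) / (1 - p i * q i) := fun i => rfl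
  have hrp0 : ∀ i, 0 < rp i := by
    intro i; rw [hrp i]; exact div_pos (by linarith [hp1 i]) (hd i)
  have hrp1 : ∀ i, rp i < 1 := by
    intro i; rw [hrp i, div_lt_one (hd i)]; nlinarith [hp0 i, hq1 i]
  have hrq0 : ∀ i, 0 < rq i := by
    intro i; rw [hrq i]; exact div_pos (by linarith [hq1 i]) (hd i)
  have hrq1 : ∀ i, rq i < 1 := by
    intro i; rw [hrq i, div_lt_one (hd i)]; nlinarith [hq0 i, hp1 i]
  -- pointwise identities
  have E1 : (1 : Fin k → ℝ) - (1 - p) = p := by funext i; show (1:ℝ) - (1 - p i) = p i; ring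
  have E1q : (1 : Fin k → ℝ) - (1 - q) = q := by funext i; show (1:ℝ) - (1 - q i) = q i; ring
  have E2 : p * q / p = q := by
    funext i; show p i * q i / p i = q i
    exact mul_div_cancel_left₀ (q i) (ne_of_gt (hp0 i))
  have E3 : p * q / q = p := by
    funext i; show p i * q i / q i = p i
    exact mul_div_cancel_right₀ (p i) (ne_of_gt (hq0 i))
  have E5 : (1 - p) / (1 - p) = (1 : Fin k → ℝ) := by
    funext i; show ((1:ℝ) - p i) / (1 - p i) = 1
    exact div_self (by linarith [hp1 i])
  have E5q : (1 - q) / (1 - q) = (1 : Fin k → ℝ) := by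
    funext i; show ((1:ℝ) - q i) / (1 - q i) = 1
    exact div_self (by linarith [hq1 i])
  have E6 : p / p = (1 : Fin k → ℝ) := by
    funext i; show p i / p i = (1:ℝ); exact div_self (ne_of_gt (hp0 i))
  have E6q : q / q = (1 : Fin k → ℝ) := by
    funext i; show q i / q i = (1:ℝ); exact div_self (ne_of_gt (hq0 i))
  have E7 : (1 : Fin k → ℝ) - (1 - rp) = rp := by
    funext i; show (1:ℝ) - (1 - rp i) = rp i; ring
  have E7q : (1 : Fin k → ℝ) - (1 - rq) = rq := by
    funext i; show (1:ℝ) - (1 - rq i) = rq i; ring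
  have E8 : (1 - rp) / (1 - rp) = (1 : Fin k → ℝ) := by
    funext i; show ((1:ℝ) - rp i) / (1 - rp i) = 1
    exact div_self (by linarith [hrp1 i])
  have E8q : (1 - rq) / (1 - rq) = (1 : Fin k → ℝ) := by
    funext i; show ((1:ℝ) - rq i) / (1 - rq i) = 1
    exact div_self (by linarith [hrq1 i])
  have E9 : rp / rp = (1 : Fin k → ℝ) := by
    funext i; show rp i / rp i = (1:ℝ); exact div_self (ne_of_gt (hrp0 i))
  have E9q : rq / rq = (1 : Fin k → ℝ) := by
    funext i; show rq i / rq i = (1:ℝ); exact div_self (ne_of_gt (hrq0 i))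
  have E10 : (1 : Fin k → ℝ) - rp = p * rq := by
    funext i
    show (1:ℝ) - (1 - p i) / (1 - p i * q i) = p i * ((1 - q i) / (1 - p i * q i))
    rw [← mul_div_assoc, eq_div_iff (hdne i), sub_mul, div_mul_cancel₀ _ (hdne i)]
    ring
  have E10q : (1 : Fin k → ℝ) - rq = q * rp := by
    funext i
    show (1:ℝ) - (1 - q i) / (1 - p i * q i) = q i * ((1 - p i) / (1 - p i * q i))
    rw [← mul_div_assoc, eq_div_iff (hdne i), sub_mul, div_mul_cancel₀ _ (hdne i)]
    ring
  have E11 : (1 : Fin k → ℝ) - p * rq = rp := by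
    rw [← E10]; funext i; show (1:ℝ) - (1 - rp i) = rp i; ring
  have E11q : (1 : Fin k → ℝ) - q * rp = rq := by
    rw [← E10q]; funext i; show (1:ℝ) - (1 - rq i) = rq i; ring
  have E12 : q * rp / rp = q := by
    funext i; show q i * rp i / rp i = q i
    field_simp [ne_of_gt (hrp0 i)]
  have E14 : p * rq / rq = p := by
    funext i; show p i * rq i / rq i = p i
    field_simp [ne_of_gt (hrq0 i)]
  have E15 : (1 - p * q) * rq = 1 - q := by
    funext i
    show ((1:ℝ) - p i * q i) * ((1 - q i) / (1 - p i * q i)) = 1 - q i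
    rw [mul_comm]; exact div_mul_cancel₀ _ (hdne i)
  have E16 : (1 - p * q) * rp = 1 - p := by
    funext i
    show ((1:ℝ) - p i * q i) * ((1 - p i) / (1 - p i * q i)) = 1 - p i
    rw [mul_comm]; exact div_mul_cancel₀ _ (hdne i)
  -- Icc memberships
  have mIp : p ∈ Set.Icc (0 : Fin k → ℝ) 1 :=
    hIcc p (fun i => le_of_lt (hp0 i)) (fun i => le_of_lt (hp1 i))
  have mIq : q ∈ Set.Icc (0 : Fin k → ℝ) 1 :=
    hIcc q (fun i => le_of_lt (hq0 i)) (fun i => le_of_lt (hq1 i))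
  have mIrp : rp ∈ Set.Icc (0 : Fin k → ℝ) 1 :=
    hIcc rp (fun i => le_of_lt (hrp0 i)) (fun i => le_of_lt (hrp1 i))
  have mIrq : rq ∈ Set.Icc (0 : Fin k → ℝ) 1 :=
    hIcc rq (fun i => le_of_lt (hrq0 i)) (fun i => le_of_lt (hrq1 i))
  have mIpq : (1 - p * q) ∈ Set.Icc (0 : Fin k → ℝ) 1 := by
    refine hIcc _ (fun i => ?_) (fun i => ?_)
    · show (0:ℝ) ≤ 1 - p i * q i; linarith [hd i]
    · show (1:ℝ) - p i * q i ≤ 1; nlinarith [hp0 i, hq0 i]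
  -- multiplicativity consequences
  have hm1 : M (1 - q) = M (1 - p * q) * M rq := by
    rw [← E15]; exact hmul _ mIpq _ mIrq
  have hm2 : M (1 - p) = M (1 - p * q) * M rp := by
    rw [← E16]; exact hmul _ mIpq _ mIrp
  have hm5 : M (p * rq) = M p * M rq := hmul _ mIp _ mIrq
  have hm6 : M (q * rp) = M q * M rp := hmul _ mIq _ mIrp
  have Mpqnn : 0 ≤ M (1 - p * q) :=
    Mnn _ (fun i => le_of_lt (hd i)) (fun i => by
      show (1:ℝ) - p i * q i ≤ 1; nlinarith [hp0 i, hq0 i])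
  -- the seven instances of hf
  have mem1 : MemD k (1 - p) (p * q) := by
    refine ⟨fun i => ⟨?_, ?_⟩, fun i => ⟨?_, ?_⟩, ?_⟩
    · show (0:ℝ) ≤ 1 - p i; linarith [hp1 i]
    · show (1:ℝ) - p i < 1; linarith [hp0 i]
    · exact mul_nonneg (le_of_lt (hp0 i)) (le_of_lt (hq0 i))
    · show p i * q i < 1; linarith [hd i]
    · intro i; show (1:ℝ) - p i + p i * q i ≤ 1; nlinarith [hp0 i, hq1 i]
  have mem2 : MemD k (1 - q) (p * q) := by
    refine ⟨fun i => ⟨?_, ?_⟩, fun i => ⟨?_, ?_⟩, ?_⟩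
    · show (0:ℝ) ≤ 1 - q i; linarith [hq1 i]
    · show (1:ℝ) - q i < 1; linarith [hq0 i]
    · exact mul_nonneg (le_of_lt (hp0 i)) (le_of_lt (hq0 i))
    · show p i * q i < 1; linarith [hd i]
    · intro i; show (1:ℝ) - q i + p i * q i ≤ 1; nlinarith [hq0 i, hp1 i]
  have mem3 : MemD k p (1 - p) := by
    refine ⟨fun i => ⟨le_of_lt (hp0 i), hp1 i⟩, fun i => ⟨?_, ?_⟩, ?_⟩
    · show (0:ℝ) ≤ 1 - p i; linarith [hp1 i]
    · show (1:ℝ) - p i < 1; linarith [hp0 i]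
    · intro i; show p i + (1 - p i) ≤ (1:ℝ); linarith
  have mem4 : MemD k q (1 - q) := by
    refine ⟨fun i => ⟨le_of_lt (hq0 i), hq1 i⟩, fun i => ⟨?_, ?_⟩, ?_⟩
    · show (0:ℝ) ≤ 1 - q i; linarith [hq1 i]
    · show (1:ℝ) - q i < 1; linarith [hq0 i]
    · intro i; show q i + (1 - q i) ≤ (1:ℝ); linarith
  have mem5 : MemD k rp (1 - rp) := by
    refine ⟨fun i => ⟨le_of_lt (hrp0 i), hrp1 i⟩, fun i => ⟨?_, ?_⟩, ?_⟩
    · show (0:ℝ) ≤ 1 - rp i; linarith [hrp1 i]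
    · show (1:ℝ) - rp i < 1; linarith [hrp0 i]
    · intro i; show rp i + (1 - rp i) ≤ (1:ℝ); linarith
  have mem6 : MemD k rq (1 - rq) := by
    refine ⟨fun i => ⟨le_of_lt (hrq0 i), hrq1 i⟩, fun i => ⟨?_, ?_⟩, ?_⟩
    · show (0:ℝ) ≤ 1 - rq i; linarith [hrq1 i]
    · show (1:ℝ) - rq i < 1; linarith [hrq0 i]
    · intro i; show rq i + (1 - rq i) ≤ (1:ℝ); linarith
  have mem7 : MemD k (p * rq) (q * rp) := by
    refine ⟨fun i => ⟨?_, ?_⟩, fun i => ⟨?_, ?_⟩, ?_⟩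
    · exact mul_nonneg (le_of_lt (hp0 i)) (le_of_lt (hrq0 i))
    · show p i * rq i < 1; nlinarith [hp1 i, hrq1 i, hp0 i, hrq0 i]
    · exact mul_nonneg (le_of_lt (hq0 i)) (le_of_lt (hrp0 i))
    · show q i * rp i < 1; nlinarith [hq1 i, hrp1 i, hq0 i, hrp0 i]
    · intro i
      show p i * rq i + q i * rp i ≤ (1:ℝ)
      rw [hrp i, hrq i]
      have hsum : p i * ((1 - q i) / (1 - p i * q i)) + q i * ((1 - p i) / (1 - p i * q i))
          = (p i * (1 - q i) + q i * (1 - p i)) / (1 - p i * q i) := by ring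
      rw [hsum, div_le_one (hd i)]
      nlinarith [hp1 i, hq1 i, hp0 i, hq0 i]
  have h1 := hf (1 - p) (p * q) mem1
  rw [E1, E2, ← hrpdef] at h1
  have h2 := hf (1 - q) (p * q) mem2
  rw [E1q, E3, ← hrqdef] at h2
  have h3 := hf p (1 - p) mem3
  rw [E1, E5, E6] at h3
  have h4 := hf q (1 - q) mem4
  rw [E1q, E5q, E6q] at h4
  have h5 := hf rp (1 - rp) mem5
  rw [E7, E8, E9, E10, hm5] at h5
  have h6 := hf rq (1 - rq) mem6
  rw [E7q, E8q, E9q, E10q, hm6] at h6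
  have h7 := hf (p * rq) (q * rp) mem7
  rw [E11, E11q, E12, E14] at h7
  -- key algebraic identity
  have key : (M q + M (1 - q) - 1) * (f p - f 1 * M p) -
      (M p + M (1 - p) - 1) * (f q - f 1 * M q) =
      -(f (1 - p) + M p * f q - f (p * q) - M (1 - p * q) * f rp)
      + (f (1 - q) + M q * f p - f (p * q) - M (1 - p * q) * f rq)
      - (f p + M (1 - p) * f 1 - f (1 - p) - M p * f 1)
      + (f q + M (1 - q) * f 1 - f (1 - q) - M q * f 1)
      - M (1 - p * q) *
        ((f rp + M p * M rq * f 1 - f (p * rq) - M rp * f 1)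
          - (f rq + M q * M rp * f 1 - f (q * rp) - M rq * f 1)
          + (f (p * rq) + M rp * f q - f (q * rp) - M rq * f p)) := by
    rw [hm1, hm2]
    ring
  have b1 := abs_le.mp h1
  have b2 := abs_le.mp h2
  have b3 := abs_le.mp h3
  have b4 := abs_le.mp h4
  have b5 := abs_le.mp h5
  have b6 := abs_le.mp h6
  have b7 := abs_le.mp h7
  have uu : M (1 - p * q) *
      ((f rp + M p * M rq * f 1 - f (p * rq) - M rp * f 1)
        - (f rq + M q * M rp * f 1 - f (q * rp) - M rq * f 1)
        + (f (p * rq) + M rp * f q - f (q * rp) - M rq * f p)) ≤ M (1 - p * q) * (3 * ε) :=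
    mul_le_mul_of_nonneg_left (by linarith [b5.1, b5.2, b6.1, b6.2, b7.1, b7.2]) Mpqnn
  have ll : M (1 - p * q) * (-(3 * ε)) ≤ M (1 - p * q) *
      ((f rp + M p * M rq * f 1 - f (p * rq) - M rp * f 1)
        - (f rq + M q * M rp * f 1 - f (q * rp) - M rq * f 1)
        + (f (p * rq) + M rp * f q - f (q * rp) - M rq * f p)) :=
    mul_le_mul_of_nonneg_left (by linarith [b5.1, b5.2, b6.1, b6.2, b7.1, b7.2]) Mpqnn
  rw [key, abs_le]
  constructor
  · nlinarith [b1.1, b1.2, b2.1, b2.2, b3.1, b3.2, b4.1, b4.2, uu, ll]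
  · nlinarith [b1.1, b1.2, b2.1, b2.2, b3.1, b3.2, b4.1, b4.2, uu, ll]
end

section
/- Let 0 < α ≠ 1 be a real number, ε ≥ 0, and let f : [0,1] → ℝ satisfy |f(x) + (1−x)^α·f(y/(1−x)) − f(y) − (1−y)^α·f(x/(1−y))| ≤ ε for all pairs (x,y) with x, y ∈ [0,1), x + y ≤ 1. Then there exist a, b ∈ ℝ such that |f(x) − (a·x^α + b·((1−x)^α − 1))| ≤ 7ε·|2^{1−α} − 1|^{−1} for all x ∈ [0,1]. -/
/-!
Both `x ^ α` and `(1 - x) ^ α - 1` solve the equation exactly, so subtracting a suitable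
combination of them reduces to an `ε`-approximate solution `g` with `g 1 = g (1/2) = 0`.
For such `g` and `0 < x < 1`, six instances of the equation, at points built from `x/2`,
`1/(2-x)` and `x/(2-x)`, combine (using `(1 - x/2)^α (1/(2-x))^α = 2^{-α}`) into
`(2^{1-α} - 1) g(x)`, which is therefore bounded by `6ε`; at `x = 0` the instance
`(1 - 2^{-1/α}, 0)` bounds `g 0` by `2ε`.
-/

open Real Set

namespace Real

variable {α : ℝ}

lemma rpow_mul_rpow_div {s t : ℝ} (hs : 0 < s) (ht : 0 ≤ t) (α : ℝ) :
    s ^ α * (t / s) ^ α = t ^ α := by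
  rw [div_rpow ht hs.le, mul_div_cancel₀ _ (rpow_pos_of_pos hs α).ne']

lemma two_rpow_one_sub (α : ℝ) : (2 : ℝ) ^ (1 - α) = 2 * (1 / 2) ^ α := by
  rw [rpow_sub two_pos, rpow_one, one_div, inv_rpow zero_le_two, div_eq_mul_inv]

lemma two_rpow_one_sub_ne_one (hα : α ≠ 1) : (2 : ℝ) ^ (1 - α) ≠ 1 := by
  intro h
  rw [← rpow_zero 2, rpow_right_inj two_pos (by norm_num)] at h
  exact hα (by linarith)

lemma abs_two_rpow_one_sub_sub_one_le (hα : 0 < α) : |(2 : ℝ) ^ (1 - α) - 1| ≤ 1 := by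
  have : (2 : ℝ) ^ (1 - α) < 2 := by
    simpa using rpow_lt_rpow_of_exponent_lt one_lt_two (by linarith : 1 - α < 1)
  rw [abs_le]
  constructor <;> linarith [rpow_pos_of_pos two_pos (1 - α)]

end Real

namespace InformationEquation

noncomputable def defect (α : ℝ) (f : ℝ → ℝ) (x y : ℝ) : ℝ :=
  f x + (1 - x) ^ α * f (y / (1 - x)) - f y - (1 - y) ^ α * f (x / (1 - y))

def IsApproxSolution (α ε : ℝ) (f : ℝ → ℝ) : Prop :=
  ∀ x y : ℝ, 0 ≤ x → x < 1 → 0 ≤ y → y < 1 → x + y ≤ 1 →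
    |defect α f x y| ≤ ε

noncomputable def exactSolution (α a b : ℝ) (x : ℝ) : ℝ :=
  a * x ^ α + b * ((1 - x) ^ α - 1)

variable {α ε : ℝ} {f : ℝ → ℝ}

lemma defect_exactSolution {x y : ℝ} (a b : ℝ) (hx0 : 0 ≤ x) (hx : x < 1) (hy0 : 0 ≤ y)
    (hy : y < 1) (hxy : x + y ≤ 1) : defect α (exactSolution α a b) x y = 0 := by
  have hx' : 0 < 1 - x := by linarith
  have hy' : 0 < 1 - y := by linarith
  have h1 : 1 - y / (1 - x) = (1 - x - y) / (1 - x) := by field_simp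
  have h2 : 1 - x / (1 - y) = (1 - x - y) / (1 - y) := by field_simp; ring
  have e1 := rpow_mul_rpow_div hx' hy0 α
  have e2 := rpow_mul_rpow_div hy' hx0 α
  have e3 := rpow_mul_rpow_div hx' (by linarith : 0 ≤ 1 - x - y) α
  have e4 := rpow_mul_rpow_div hy' (by linarith : 0 ≤ 1 - x - y) α
  simp only [defect, exactSolution, h1, h2]
  linear_combination a * e1 - a * e2 + b * e3 - b * e4

lemma defect_sub {g : ℝ → ℝ} (x y : ℝ) :
    defect α (fun t => f t - g t) x y = defect α f x y - defect α g x y := by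
  simp only [defect]; ring

lemma IsApproxSolution.nonneg (hf : IsApproxSolution α ε f) : 0 ≤ ε :=
  (abs_nonneg _).trans (hf 0 0 le_rfl one_pos le_rfl one_pos (by norm_num))

lemma IsApproxSolution.sub_exactSolution (hf : IsApproxSolution α ε f) (a b : ℝ) :
    IsApproxSolution α ε (fun t => f t - exactSolution α a b t) := by
  intro x y hx0 hx hy0 hy hxy
  rw [defect_sub, defect_exactSolution a b hx0 hx hy0 hy hxy, sub_zero]
  exact hf x y hx0 hx hy0 hy hxy

lemma defect_zero_right (x : ℝ) : defect α f x 0 = ((1 - x) ^ α - 1) * f 0 := by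
  simp only [defect, zero_div, sub_zero, one_rpow, div_one]; ring

lemma IsApproxSolution.abs_apply_zero_le (hα : 0 < α) (hf : IsApproxSolution α ε f) :
    |f 0| ≤ 2 * ε := by
  set r : ℝ := (1 / 2) ^ α⁻¹
  have hr0 : 0 < r := rpow_pos_of_pos one_half_pos _
  have hr1 : r < 1 := rpow_lt_one one_half_pos.le one_half_lt_one (inv_pos.mpr hα)
  have h := hf (1 - r) 0 (by linarith) (by linarith) le_rfl one_pos (by linarith)
  rw [defect_zero_right, sub_sub_cancel, rpow_inv_rpow one_half_pos.le hα.ne', abs_mul] at h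
  norm_num at h
  linarith

lemma defect_one_sub {x : ℝ} (hx0 : x ≠ 0) (hx1 : 1 - x ≠ 0) :
    defect α f x (1 - x) = f x + (1 - x) ^ α * f 1 - f (1 - x) - x ^ α * f 1 := by
  rw [defect, sub_sub_cancel, div_self hx1, div_self hx0]

/-- With `u = 1/(2-x)` and `w = x/(2-x)`, each of the six defects involves at most three values
of `g` besides `g 1` and `g (1/2)`, and everything except the multiples of `g x` cancels. -/
lemma two_rpow_one_sub_sub_one_mul_eq {g : ℝ → ℝ} (hg1 : g 1 = 0) (hg2 : g (1 / 2) = 0)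
    {x : ℝ} (hx0 : 0 < x) (hx1 : x < 1) :
    ((2 : ℝ) ^ (1 - α) - 1) * g x =
      -defect α g (x / 2) (1 / 2) + defect α g (x / 2) (1 - x) - defect α g x (1 - x) +
        (1 - x / 2) ^ α * (defect α g (1 / (2 - x)) (1 - 1 / (2 - x)) +
          defect α g (x / (2 - x)) (1 - x / (2 - x)) -
          defect α g (x / (2 - x)) (1 - 1 / (2 - x))) := by
  have hs : 0 < 2 - x := by linarith
  have hx1' : 1 - x ≠ 0 := by linarith
  set u := 1 / (2 - x) with hu
  set w := x / (2 - x) with hw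
  have a1 : 1 / 2 / (1 - x / 2) = u := by rw [hu]; field_simp
  have a2 : x / 2 / (1 - 1 / 2) = x := by ring
  have a3 : (1 - x) / (1 - x / 2) = 1 - w := by rw [hw]; field_simp; ring
  have a4 : x / 2 / (1 - (1 - x)) = 1 / 2 := by rw [sub_sub_cancel]; field_simp
  have a5 : (1 - u) / (1 - w) = 1 / 2 := by
    rw [hu, hw, one_sub_div hs.ne', one_sub_div hs.ne', div_div_div_cancel_right₀ hs.ne',
      div_eq_div_iff (by linarith) two_ne_zero]
    ring
  have a6 : w / (1 - (1 - u)) = x := by rw [sub_sub_cancel, hu, hw]; field_simp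
  have d1 :
      defect α g (x / 2) (1 / 2) = g (x / 2) + (1 - x / 2) ^ α * g u - (1 / 2) ^ α * g x := by
    rw [defect, a1, a2, hg2]; norm_num
  have d2 :
      defect α g (x / 2) (1 - x) = g (x / 2) + (1 - x / 2) ^ α * g (1 - w) - g (1 - x) := by
    rw [defect, a3, a4, hg2, sub_sub_cancel]; ring
  have d3 := defect_one_sub (α := α) (f := g) hx0.ne' hx1'
  have d4 := defect_one_sub (α := α) (f := g) (x := u) (by rw [hu]; positivity)
    (by rw [hu, one_sub_div hs.ne']; exact div_ne_zero (by linarith) hs.ne')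
  have d5 := defect_one_sub (α := α) (f := g) (x := w) (by rw [hw]; positivity)
    (by rw [hw, one_sub_div hs.ne']; exact div_ne_zero (by linarith) hs.ne')
  have d6 : defect α g w (1 - u) = g w - g (1 - u) - u ^ α * g x := by
    rw [defect, a5, a6, hg2, sub_sub_cancel]; ring
  have k : (1 - x / 2) ^ α * u ^ α = (1 / 2) ^ α := by
    rw [← mul_rpow (by linarith) (by rw [hu]; positivity)]; congr 1; rw [hu]; field_simp
  rw [d1, d2, d3, d4, d5, d6, hg1, two_rpow_one_sub]
  linear_combination (-g x) * k

lemma IsApproxSolution.abs_defect_one_sub_le (hf : IsApproxSolution α ε f) {t : ℝ} (ht0 : 0 < t)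
    (ht1 : t < 1) : |defect α f t (1 - t)| ≤ ε :=
  hf t (1 - t) ht0.le ht1 (by linarith) (by linarith) (by linarith)

lemma IsApproxSolution.abs_two_rpow_one_sub_sub_one_mul_le (hα : 0 < α)
    (hf : IsApproxSolution α ε f) (h1 : f 1 = 0) (h2 : f (1 / 2) = 0) {x : ℝ}
    (hx : x ∈ Icc 0 1) : |((2 : ℝ) ^ (1 - α) - 1) * f x| ≤ 6 * ε := by
  have hε := hf.nonneg
  obtain ⟨hx0, hx1⟩ := hx
  rcases hx0.eq_or_lt with rfl | hx0
  · calc |((2 : ℝ) ^ (1 - α) - 1) * f 0| ≤ 1 * (2 * ε) := by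
          rw [abs_mul]
          exact mul_le_mul (abs_two_rpow_one_sub_sub_one_le hα) (hf.abs_apply_zero_le hα)
            (abs_nonneg _) zero_le_one
      _ ≤ 6 * ε := by linarith
  rcases hx1.eq_or_lt with rfl | hx1
  · simpa [h1] using hε
  rw [two_rpow_one_sub_sub_one_mul_eq h1 h2 hx0 hx1]
  have hs : 0 < 2 - x := by linarith
  set u := 1 / (2 - x) with hu
  set w := x / (2 - x) with hw
  have hu0 : 0 < u := by positivity
  have hu1 : u < 1 := by rw [hu, div_lt_one hs]; linarith
  have hw0 : 0 < w := by positivity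
  have hwu : w < u := by rw [hu, hw]; gcongr
  have hK0 : 0 ≤ (1 - x / 2) ^ α := rpow_nonneg (by linarith) α
  have hK1 : (1 - x / 2) ^ α ≤ 1 := rpow_le_one (by linarith) (by linarith) hα.le
  obtain ⟨l1, r1⟩ := abs_le.1 (hf (x / 2) (1 / 2) (by linarith) (by linarith) (by norm_num)
    (by norm_num) (by linarith))
  obtain ⟨l2, r2⟩ := abs_le.1 (hf (x / 2) (1 - x) (by linarith) (by linarith) (by linarith)
    (by linarith) (by linarith))
  obtain ⟨l3, r3⟩ := abs_le.1 (hf.abs_defect_one_sub_le hx0 hx1)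
  obtain ⟨l4, r4⟩ := abs_le.1 (hf.abs_defect_one_sub_le hu0 hu1)
  obtain ⟨l5, r5⟩ := abs_le.1 (hf.abs_defect_one_sub_le hw0 (hwu.trans hu1))
  obtain ⟨l6, r6⟩ := abs_le.1 (hf w (1 - u) hw0.le (hwu.trans hu1) (by linarith) (by linarith)
    (by linarith))
  have hS : |(1 - x / 2) ^ α *
      (defect α f u (1 - u) + defect α f w (1 - w) - defect α f w (1 - u))| ≤ 3 * ε := by
    rw [abs_mul, abs_of_nonneg hK0]
    exact (mul_le_of_le_one_left (abs_nonneg _) hK1).trans (abs_le.2 ⟨by linarith, by linarith⟩)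
  obtain ⟨lS, rS⟩ := abs_le.1 hS
  exact abs_le.2 ⟨by linarith, by linarith⟩

lemma exists_exactSolution_eq (hα : α ≠ 0) (hκ : (2 : ℝ) ^ (1 - α) ≠ 1)
    (f : ℝ → ℝ) :
    ∃ a b : ℝ, exactSolution α a b 1 = f 1 ∧ exactSolution α a b (1 / 2) = f (1 / 2) := by
  obtain ⟨b, hb⟩ : ∃ b, b * ((2 : ℝ) ^ (1 - α) - 1) = f (1 / 2) - f 1 * (1 / 2) ^ α :=
    ⟨_, div_mul_cancel₀ _ (sub_ne_zero.2 hκ)⟩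
  refine ⟨f 1 + b, b, ?_, ?_⟩
  · simp [exactSolution, zero_rpow hα]
  · rw [exactSolution, show (1 : ℝ) - 1 / 2 = 1 / 2 by norm_num]
    linear_combination hb - b * two_rpow_one_sub α

end InformationEquation

theorem stmt_9_general (α : ℝ) (hα : 0 < α) (hα1 : α ≠ 1) (ε : ℝ)
    (f : ℝ → ℝ)
    (hf : ∀ x y : ℝ, 0 ≤ x → x < 1 → 0 ≤ y → y < 1 → x + y ≤ 1 →
      |f x + (1 - x) ^ α * f (y / (1 - x)) - f y - (1 - y) ^ α * f (x / (1 - y))| ≤ ε) :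
    ∃ a b : ℝ, ∀ x ∈ Set.Icc (0 : ℝ) 1,
      |f x - (a * x ^ α + b * ((1 - x) ^ α - 1))| ≤ 7 * ε * |(2 : ℝ) ^ (1 - α) - 1|⁻¹ := by
  have hf' : InformationEquation.IsApproxSolution α ε f := hf
  have hκ := two_rpow_one_sub_ne_one hα1
  have hε := hf'.nonneg
  obtain ⟨a, b, h1, hhalf⟩ := InformationEquation.exists_exactSolution_eq hα.ne' hκ f
  refine ⟨a, b, fun x hx => ?_⟩
  have hg := (hf'.sub_exactSolution a b).abs_two_rpow_one_sub_sub_one_mul_le hα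
    (sub_eq_zero.2 h1.symm) (sub_eq_zero.2 hhalf.symm) hx
  rw [abs_mul, ← le_div_iff₀' (abs_pos.2 (sub_ne_zero.2 hκ))] at hg
  calc _ ≤ 6 * ε / |(2 : ℝ) ^ (1 - α) - 1| := hg
    _ ≤ 7 * ε * |(2 : ℝ) ^ (1 - α) - 1|⁻¹ := by
      rw [div_eq_mul_inv]
      gcongr
      norm_num

/-- Maksa's stability theorem (the one-dimensional case `M x = x ^ α`, `0 < α ≠ 1`):
an `ε`-approximate solution of the fundamental equation of information of degree `α`
is within `7ε·|2^(1-α) - 1|⁻¹` of an exact solution `a·x^α + b·((1-x)^α - 1)`.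
Here `^` is the real power `Real.rpow`, so `0^α = 0` for `α > 0`. -/
theorem stmt_9 (α : ℝ) (hα : 0 < α) (hα1 : α ≠ 1) (ε : ℝ) (hε : 0 ≤ ε)
    (f : ℝ → ℝ)
    (hf : ∀ x y : ℝ, 0 ≤ x → x < 1 → 0 ≤ y → y < 1 → x + y ≤ 1 →
      |f x + (1 - x) ^ α * f (y / (1 - x)) - f y - (1 - y) ^ α * f (x / (1 - y))| ≤ ε) :
    ∃ a b : ℝ, ∀ x ∈ Set.Icc (0 : ℝ) 1,
      |f x - (a * x ^ α + b * ((1 - x) ^ α - 1))| ≤ 7 * ε * |(2 : ℝ) ^ (1 - α) - 1|⁻¹ :=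
  stmt_9_general α hα hα1 ε f hf
end

section
/- For every n ≥ 2, real numbers c, d ∈ ℝ, and multiplicative function M : [0,1]^k → ℝ with M(1) = 1, the sequence of functions J_n : Γ_n → ℝ defined by J_n(p₁,…,p_n) := c·(∑_{i=1}^n M(p_i) − 1) + d·(M(p₁) − 1) is an M-recursive and 3-semisymmetric information measure. -/
open Finset

/-- For any `c, d ∈ ℝ` and multiplicative `M` with `M 1 = 1`, the sequence
`J_n (p₁,…,p_n) := c·(∑_i M (p_i) - 1) + d·(M p₁ - 1)` (n ≥ 2) is an `M`-recursive and
3-semisymmetric information measure. -/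
theorem stmt_11 (k : ℕ) (hk : 0 < k) (c d : ℝ)
    (M : (Fin k → ℝ) → ℝ) (hmul : IsMultiplicative k M) (hM1 : M 1 = 1)
    (J : ∀ n, (Fin n → Fin k → ℝ) → ℝ)
    (hJ : ∀ n : ℕ, ∀ p : Fin (n + 2) → Fin k → ℝ,
      J (n + 2) p = c * ((∑ i, M (p i)) - 1) + d * (M (p 0) - 1)) :
    MRecursive k M J ∧ ThreeSemisymmetric k J := by
  constructor
  · intro n p hp
    obtain ⟨hnn, hsum⟩ := hp
    set q0 := p 0 with hq0
    set q1 := p 1 with hq1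
    have hsumj : ∀ j, ∑ i : Fin (n+3), p i j = 1 := by
      intro j
      have := congrFun hsum j
      simpa [Finset.sum_apply] using this
    have hsle : ∀ j, q0 j + q1 j ≤ 1 := by
      intro j
      have h2 := hsumj j
      rw [Fin.sum_univ_succ, Fin.sum_univ_succ] at h2
      simp only [Fin.succ_zero_eq_one] at h2
      rw [← hq0, ← hq1] at h2
      nlinarith [Finset.sum_nonneg (fun i (_ : i ∈ Finset.univ) =>
        hnn (Fin.succ (Fin.succ i)) j)]
    have hsIcc : q0 + q1 ∈ Set.Icc (0 : Fin k → ℝ) 1 := by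
      constructor
      · intro j; exact add_nonneg (hnn 0 j) (hnn 1 j)
      · intro j; exact hsle j
    have hdIcc : ∀ x : Fin k → ℝ, (∀ j, 0 ≤ x j) → (∀ j, x j ≤ q0 j + q1 j) →
        x / (q0 + q1) ∈ Set.Icc (0 : Fin k → ℝ) 1 := by
      intro x hx hxle
      constructor
      · intro j; exact div_nonneg (hx j) (add_nonneg (hnn 0 j) (hnn 1 j))
      · intro j
        exact div_le_one_of_le₀ (hxle j) (add_nonneg (hnn 0 j) (hnn 1 j))
    have h0Icc := hdIcc q0 (fun j => hnn 0 j) (fun j => le_add_of_nonneg_right (hnn 1 j))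
    have h1Icc := hdIcc q1 (fun j => hnn 1 j) (fun j => le_add_of_nonneg_left (hnn 0 j))
    have hcancel : ∀ x : Fin k → ℝ, (∀ j, 0 ≤ x j) → (∀ j, x j ≤ q0 j + q1 j) →
        (q0 + q1) * (x / (q0 + q1)) = x := by
      intro x hx hxle
      funext j
      by_cases h : q0 j + q1 j = 0
      · have : x j = 0 := le_antisymm (by simpa [h] using hxle j) (hx j)
        simp [Pi.mul_apply, Pi.div_apply, Pi.add_apply, h, this]
      · simp only [Pi.mul_apply, Pi.div_apply, Pi.add_apply]
        field_simp
    have e0 : M (q0 + q1) * M (q0 / (q0 + q1)) = M q0 := by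
      rw [← hmul _ hsIcc _ h0Icc,
        hcancel q0 (fun j => hnn 0 j) (fun j => le_add_of_nonneg_right (hnn 1 j))]
    have e1 : M (q0 + q1) * M (q1 / (q0 + q1)) = M q1 := by
      rw [← hmul _ hsIcc _ h1Icc,
        hcancel q1 (fun j => hnn 1 j) (fun j => le_add_of_nonneg_left (hnn 0 j))]
    rw [hJ (n+1) p, hJ n _, hJ 0 _]
    simp only [Fin.sum_univ_succ, Fin.cons_zero, Fin.cons_succ, Fin.sum_univ_two,
      Matrix.cons_val_zero, Matrix.cons_val_one, Matrix.head_cons,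
      Matrix.cons_val_succ, Fin.succ_zero_eq_one]
    rw [← e0, ← e1]
    ring
  · intro p hp
    rw [hJ 1 p, hJ 1 ![p 0, p 2, p 1]]
    rw [Fin.sum_univ_three, Fin.sum_univ_three]
    simp only [Matrix.cons_val_zero, Matrix.cons_val_one, Matrix.head_cons,
      Matrix.cons_val_two, Matrix.tail_cons]
    ring
end
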